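/- arXiv:math/0407150 — 3 statements merged into one kernel-verified Lean document; each statement's English description precedes it below -/
import Mathlib

section
/- Let R be a commutative ring, J a finite index set, and for each j ∈ J let E_j, m_j ∈ R be elements such that 1 + E_j and 1 + m_j are invertible in R. Then (∏_{j ∈ J} (1 + E_j·(1 + m_j)⁻¹)) · ∏_{j ∈ J} (1 + E_j)⁻¹ = ∑_{I ⊆ J} (−1)^{|I|} ∏_{i ∈ I} ( m_i · E_i · (1 + m_i)⁻¹ · (1 + E_i)⁻¹ ), where the sum is over all subsets I of J. -/
open Finset

lemma aux_factor {R : Type*} [CommRing R] (e mm : R)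
    (hE : IsUnit (1 + e)) (hm : IsUnit (1 + mm)) :
    (1 + e * Ring.inverse (1 + mm)) * Ring.inverse (1 + e) =
      -(mm * e * Ring.inverse (1 + mm) * Ring.inverse (1 + e)) + 1 := by
  have h1 := Ring.mul_inverse_cancel _ hE
  have h2 := Ring.mul_inverse_cancel _ hm
  linear_combination h1 + e * Ring.inverse (1 + e) * h2

/-- The defining expression of the integral,
`∏_{j∈J} (1 + E_j/(1+m_j)) · ∏_{j∈J} (1+E_j)⁻¹`, equals the linear combination
`∑_{I⊆J} (−1)^{|I|} ∏_{i∈I} m_i E_i /((1+m_i)(1+E_i))` over all subsets `I` of `J`. -/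
theorem integral_as_chern_combination {R : Type*} [CommRing R] {ι : Type*}
    (J : Finset ι) (E m : ι → R)
    (hE : ∀ j ∈ J, IsUnit (1 + E j)) (hm : ∀ j ∈ J, IsUnit (1 + m j)) :
    (∏ j ∈ J, (1 + E j * Ring.inverse (1 + m j))) * ∏ j ∈ J, Ring.inverse (1 + E j) =
      ∑ I ∈ J.powerset, (-1 : R) ^ I.card *
        ∏ i ∈ I, (m i * E i * Ring.inverse (1 + m i) * Ring.inverse (1 + E i)) := by
  classical
  rw [← Finset.prod_mul_distrib]
  rw [Finset.prod_congr rfl (fun j hj => aux_factor (E j) (m j) (hE j hj) (hm j hj))]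
  rw [Finset.prod_add]
  refine Finset.sum_congr rfl fun I hI => ?_
  rw [Finset.prod_const_one, mul_one]
  calc ∏ i ∈ I, -(m i * E i * Ring.inverse (1 + m i) * Ring.inverse (1 + E i))
      = ∏ i ∈ I, (-1) * (m i * E i * Ring.inverse (1 + m i) * Ring.inverse (1 + E i)) := by
        simp [neg_one_mul]
    _ = _ := by rw [Finset.prod_mul_distrib, Finset.prod_const]
end

section
/- Let R be a commutative ring, J a finite index set, d ∈ R, and for each j ∈ J let m_j ∈ R be an element such that 1 + m_j is invertible in R. Then ∑_{I ⊆ J} (−1)^{|I|} · (d − |I|) · ∏_{i ∈ I} ( m_i · (1 + m_i)⁻¹ ) = ( d + ∑_{j ∈ J} m_j ) · ∏_{j ∈ J} (1 + m_j)⁻¹, where the sum on the left is over all subsets I of J and |I| denotes the cardinality of I, regarded as an element of R via the natural map ℕ → R. -/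
open Finset

private lemma aux_sum_powerset {R : Type*} [CommRing R] {ι : Type*}
    (s : Finset ι) (f : ι → R) :
    ∑ I ∈ s.powerset, (-1 : R) ^ I.card * ∏ i ∈ I, f i = ∏ i ∈ s, (1 - f i) := by
  classical
  induction s using Finset.induction_on with
  | empty => simp
  | @insert a s ha ih =>
    have h2 : ∑ I ∈ s.powerset, (-1 : R) ^ (insert a I).card * ∏ i ∈ insert a I, f i
        = ∑ I ∈ s.powerset, (-(f a)) * ((-1 : R) ^ I.card * ∏ i ∈ I, f i) := by
      refine Finset.sum_congr rfl fun I hI => ?_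
      have haI : a ∉ I := fun h => ha (mem_powerset.1 hI h)
      rw [card_insert_of_notMem haI, prod_insert haI]
      ring
    rw [sum_powerset_insert ha, h2, ← Finset.mul_sum, ih, prod_insert ha]
    ring

/-- The identity
`∑_{I⊆J} (−1)^{|I|} (d − |I|) ∏_{i∈I} m_i/(1+m_i) = (d + ∑_{j∈J} m_j) ∏_{j∈J} (1+m_j)⁻¹`,
the final step in the proof of Claim 3.11. -/
theorem pleasant_task {R : Type*} [CommRing R] {ι : Type*}
    (J : Finset ι) (d : R) (m : ι → R) (hm : ∀ j ∈ J, IsUnit (1 + m j)) :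
    ∑ I ∈ J.powerset, (-1 : R) ^ I.card * (d - (I.card : R)) *
        ∏ i ∈ I, (m i * Ring.inverse (1 + m i)) =
      (d + ∑ j ∈ J, m j) * ∏ j ∈ J, Ring.inverse (1 + m j) := by
  classical
  induction J using Finset.induction_on with
  | empty => simp
  | @insert a s ha ih =>
    have hma : IsUnit (1 + m a) := hm a (mem_insert_self a s)
    have hms : ∀ j ∈ s, IsUnit (1 + m j) := fun j hj => hm j (mem_insert_of_mem hj)
    have hsub : ∀ j ∈ insert a s, (1 : R) - m j * Ring.inverse (1 + m j)
        = Ring.inverse (1 + m j) := by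
      intro j hj
      have hinvj : (1 + m j) * Ring.inverse (1 + m j) = 1 :=
        Ring.mul_inverse_cancel _ (hm j hj)
      linear_combination -hinvj
    have hsum0 : ∑ I ∈ s.powerset, (-1 : R) ^ I.card *
        ∏ i ∈ I, (m i * Ring.inverse (1 + m i)) = ∏ j ∈ s, Ring.inverse (1 + m j) := by
      rw [aux_sum_powerset]
      exact Finset.prod_congr rfl fun j hj => hsub j (mem_insert_of_mem hj)
    have hstep : ∑ I ∈ s.powerset, (-1 : R) ^ (insert a I).card * (d - ((insert a I).card : R)) *
        ∏ i ∈ insert a I, (m i * Ring.inverse (1 + m i)) =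
        ∑ I ∈ s.powerset, (m a * Ring.inverse (1 + m a)) *
          ((-1 : R) ^ I.card * ∏ i ∈ I, (m i * Ring.inverse (1 + m i))
            - (-1 : R) ^ I.card * (d - (I.card : R)) *
              ∏ i ∈ I, (m i * Ring.inverse (1 + m i))) := by
      refine Finset.sum_congr rfl fun I hI => ?_
      have haI : a ∉ I := fun h => ha (mem_powerset.1 hI h)
      rw [card_insert_of_notMem haI, prod_insert haI]
      push_cast
      ring
    rw [sum_powerset_insert ha, hstep, ← Finset.mul_sum, Finset.sum_sub_distrib, hsum0,
      ih hms, sum_insert ha, prod_insert ha]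
    linear_combination (∏ j ∈ s, Ring.inverse (1 + m j)) * (d + ∑ j ∈ s, m j) *
      hsub a (mem_insert_self a s)
end

section
/- Let L be a distributive lattice, M an additive commutative group, and μ : L → M a function satisfying μ(a ⊔ b) + μ(a ⊓ b) = μ(a) + μ(b) for all a, b ∈ L. Then for every r ≥ 1 and all a₁, …, a_r ∈ L, μ(a₁ ⊓ a₂ ⊓ ⋯ ⊓ a_r) = ∑_{∅ ≠ I ⊆ {1,…,r}} (−1)^{|I|+1} μ( ⊔_{i ∈ I} a_i ), where the sum is over all nonempty subsets I of {1,…,r}. -/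
/-!
Induct on the index set. Splitting the nonempty subsets of `insert i t` into those avoiding `i`
and those containing it, and absorbing `aᵢ` into the joins of the latter, shows that the
alternating sum for `insert i t` is `μ aᵢ + S(a) - S(aᵢ ⊔ a)`, where `S` is the alternating sum
over `t`. By induction and `aᵢ ⊔ ⨅ⱼ aⱼ = ⨅ⱼ (aᵢ ⊔ aⱼ)` this is
`μ aᵢ + μ(⨅ⱼ aⱼ) - μ(aᵢ ⊔ ⨅ⱼ aⱼ)`, which is `μ(aᵢ ⊓ ⨅ⱼ aⱼ)` by the two-set case.
-/

open Finset

section Valuation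

variable {L M ι : Type*}

section SemilatticeSup

variable [SemilatticeSup L]

theorem Finset.sup_sup'_distrib_left {s : Finset ι} (hs : s.Nonempty) (f : ι → L) (c : L) :
    c ⊔ s.sup' hs f = s.sup' hs fun i => c ⊔ f i :=
  apply_sup'_eq_sup'_comp hs (c ⊔ ·) (sup_sup_distrib_left c)

section Zero

variable [Zero M]

/-- The empty join does not exist in `L`; giving it the value `0` lets the empty index set drop
out of inclusion–exclusion sums. -/
noncomputable def supValue (μ : L → M) (a : ι → L) (I : Finset ι) : M :=
  if h : I.Nonempty then μ (I.sup' h a) else 0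

theorem supValue_of_nonempty (μ : L → M) (a : ι → L) {I : Finset ι} (h : I.Nonempty) :
    supValue μ a I = μ (I.sup' h a) :=
  dif_pos h

@[simp]
theorem supValue_empty (μ : L → M) (a : ι → L) : supValue μ a ∅ = 0 :=
  dif_neg Finset.not_nonempty_empty

theorem supValue_insert [DecidableEq ι] (μ : L → M) (a : ι → L) (i : ι) {J : Finset ι}
    (hJ : J.Nonempty) : supValue μ a (insert i J) = supValue μ (fun j => a i ⊔ a j) J := by
  rw [supValue_of_nonempty μ a (insert_nonempty i J), supValue_of_nonempty _ _ hJ,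
    sup'_insert (H := hJ), sup_sup'_distrib_left]

end Zero

variable [AddCommGroup M]

noncomputable def inclusionExclusionSum (μ : L → M) (a : ι → L) (s : Finset ι) : M :=
  ∑ I ∈ s.powerset, (-1 : ℤ) ^ (#I + 1) • supValue μ a I

theorem inclusionExclusionSum_eq_sum_nonempty (μ : L → M) (a : ι → L) (s : Finset ι) :
    inclusionExclusionSum μ a s =
      ∑ I ∈ (s.powerset.filter Finset.Nonempty).attach,
        (-1 : ℤ) ^ (I.1.card + 1) • μ (I.1.sup' (Finset.mem_filter.mp I.2).2 a) := by
  rw [inclusionExclusionSum, ← sum_filter_of_ne (p := Finset.Nonempty), ← sum_attach]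
  · exact sum_congr rfl fun I _ => by rw [supValue_of_nonempty μ a (mem_filter.mp I.2).2]
  · intro I _ hI
    contrapose! hI
    rw [hI, supValue_empty, smul_zero]

theorem neg_one_pow_smul_supValue_insert [DecidableEq ι] (μ : L → M) (a : ι → L) {i : ι}
    {J : Finset ι} (hi : i ∉ J) :
    (-1 : ℤ) ^ (#(insert i J) + 1) • supValue μ a (insert i J) =
      (if J = ∅ then μ (a i) else 0) - (-1 : ℤ) ^ (#J + 1) • supValue μ (fun j => a i ⊔ a j) J := by
  obtain rfl | hJ := J.eq_empty_or_nonempty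
  · simp [supValue_of_nonempty μ a (singleton_nonempty i)]
  · rw [if_neg hJ.ne_empty, supValue_insert μ a i hJ, card_insert_of_notMem hi, pow_succ,
      mul_neg_one, neg_smul, zero_sub]

theorem inclusionExclusionSum_insert [DecidableEq ι] (μ : L → M) (a : ι → L) {i : ι}
    {t : Finset ι} (hi : i ∉ t) :
    inclusionExclusionSum μ a (insert i t) =
      μ (a i) + inclusionExclusionSum μ a t - inclusionExclusionSum μ (fun j => a i ⊔ a j) t := by
  have hsigned : ∀ J ∈ t.powerset, (-1 : ℤ) ^ (#(insert i J) + 1) • supValue μ a (insert i J) =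
      (if J = ∅ then μ (a i) else 0) - (-1 : ℤ) ^ (#J + 1) • supValue μ (fun j => a i ⊔ a j) J :=
    fun J hJ => neg_one_pow_smul_supValue_insert μ a fun hiJ => hi (mem_powerset.mp hJ hiJ)
  rw [inclusionExclusionSum, sum_powerset_insert hi, sum_congr rfl hsigned, sum_sub_distrib,
    sum_ite_eq', if_pos (empty_mem_powerset t)]
  simp only [inclusionExclusionSum]
  abel

theorem inclusionExclusionSum_singleton (μ : L → M) (a : ι → L) (i : ι) :
    inclusionExclusionSum μ a {i} = μ (a i) := by
  classical
  rw [← insert_empty, inclusionExclusionSum_insert μ a (notMem_empty i)]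
  simp [inclusionExclusionSum]

end SemilatticeSup

theorem map_inf'_eq_inclusionExclusionSum [DistribLattice L] [AddCommGroup M] (μ : L → M)
    (hμ : ∀ a b : L, μ (a ⊔ b) + μ (a ⊓ b) = μ a + μ b) {s : Finset ι} (hs : s.Nonempty)
    (a : ι → L) : μ (s.inf' hs a) = inclusionExclusionSum μ a s := by
  classical
  induction hs using Finset.Nonempty.cons_induction generalizing a with
  | singleton i => rw [inf'_singleton, inclusionExclusionSum_singleton]
  | cons i t hit ht ih =>
    rw [inf'_cons ht, cons_eq_insert, inclusionExclusionSum_insert μ a hit, ← ih, ← ih,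
      ← inf'_sup_distrib_left]
    exact eq_sub_of_add_eq' (hμ _ _)

end Valuation

/-- Full inclusion–exclusion: if `μ : L → M` is a valuation on a distributive lattice
(`μ(a ⊔ b) + μ(a ⊓ b) = μ(a) + μ(b)`), then for `r ≥ 1` and `a₁, …, a_r ∈ L`,
`μ(a₁ ⊓ ⋯ ⊓ a_r) = ∑_{∅ ≠ I ⊆ {1,…,r}} (−1)^{|I|+1} μ(⊔_{i∈I} a_i)`. -/
theorem inclusion_exclusion {L M : Type*} [DistribLattice L] [AddCommGroup M]
    (μ : L → M) (hμ : ∀ a b : L, μ (a ⊔ b) + μ (a ⊓ b) = μ a + μ b)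
    (r : ℕ) (hr : 1 ≤ r) (a : Fin r → L) :
    μ (Finset.univ.inf' ⟨⟨0, hr⟩, Finset.mem_univ _⟩ a) =
      ∑ I ∈ ((Finset.univ : Finset (Fin r)).powerset.filter Finset.Nonempty).attach,
        (-1 : ℤ) ^ (I.1.card + 1) • μ (I.1.sup' (Finset.mem_filter.mp I.2).2 a) := by
  exact (map_inf'_eq_inclusionExclusionSum μ hμ _ a).trans
    (inclusionExclusionSum_eq_sum_nonempty μ a univ)
end
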